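/- arXiv:math/0107009 — 11 statements merged into one kernel-verified Lean document; each statement's English description precedes it below -/
import Mathlib

section
/- Let κ be an infinite cardinal and R a rigid symmetric irreflexive relation on κ. Let Φ be the family of relations S ⊆ κ × κ such that (1) R ⊆ S, (2) for all distinct α, β ∈ κ, (α,β) ∈ S or (β,α) ∈ S, and (3) if both (α,β) ∈ S and (β,α) ∈ S then (α,β) ∈ R and (β,α) ∈ R. Then for any S₁, S₂ ∈ Φ, every homomorphism f : ⟨κ,S₁⟩ → ⟨κ,S₂⟩ is also a homomorphism of ⟨κ,R⟩ to itself. -/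
theorem stmt_1 {α : Type*} [Infinite α] (R S₁ S₂ : α → α → Prop)
    (hsym : ∀ a b, R a b → R b a)
    (hirr : ∀ a, ¬ R a a)
    (hrig : ∀ f : α → α, (∀ x y, R x y → R (f x) (f y)) → f = id)
    (hS₁R : ∀ a b, R a b → S₁ a b)
    (hS₁tot : ∀ a b, a ≠ b → S₁ a b ∨ S₁ b a)
    (hS₁sym : ∀ a b, S₁ a b → S₁ b a → R a b ∧ R b a)
    (hS₂R : ∀ a b, R a b → S₂ a b)
    (hS₂tot : ∀ a b, a ≠ b → S₂ a b ∨ S₂ b a)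
    (hS₂sym : ∀ a b, S₂ a b → S₂ b a → R a b ∧ R b a)
    (f : α → α) (hf : ∀ x y, S₁ x y → S₂ (f x) (f y)) :
    ∀ x y, R x y → R (f x) (f y) := by
  intro x y hxy
  exact (hS₂sym _ _ (hf x y (hS₁R _ _ hxy)) (hf y x (hS₁R _ _ (hsym _ _ hxy)))).1
end

section
/- Let κ be an infinite cardinal and R a rigid symmetric relation on κ. Then the set T := {{α,β} : α, β ∈ κ, α ≠ β, (α,β) ∉ R} of unordered pairs of distinct elements not related by R has cardinality κ. -/
theorem stmt_3 {α : Type*} [Infinite α] (R : α → α → Prop)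
    (hsym : ∀ a b, R a b → R b a)
    (hrig : ∀ f : α → α, (∀ x y, R x y → R (f x) (f y)) → f = id) :
    Cardinal.mk {p : Set α | ∃ a b : α, a ≠ b ∧ ¬ R a b ∧ p = {a, b}} =
      Cardinal.mk α := by
  classical
  set T : Set (Set α) := {p : Set α | ∃ a b : α, a ≠ b ∧ ¬ R a b ∧ p = {a, b}} with hTdef
  have hκ : Cardinal.aleph0 ≤ Cardinal.mk α := Cardinal.infinite_iff.mp ‹Infinite α›
  -- irreflexivity
  have hirr : ∀ a, ¬ R a a := by
    intro a ha
    have h := hrig (fun _ => a) (fun x y _ => ha)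
    obtain ⟨b, hb⟩ := exists_ne a
    exact hb (congrFun h b).symm
  -- witnesses for each element of T
  have hwit : ∀ q : T, ∃ a b : α, a ≠ b ∧ ¬ R a b ∧ (q : Set α) = {a, b} := fun q => q.2
  let A : T → α := fun q => (hwit q).choose
  let B : T → α := fun q => (hwit q).choose_spec.choose
  have hAB : ∀ q : T, A q ≠ B q ∧ ¬ R (A q) (B q) ∧ (q : Set α) = {A q, B q} :=
    fun q => (hwit q).choose_spec.choose_spec
  -- upper bound
  have hle : Cardinal.mk T ≤ Cardinal.mk α := by
    have hinj : Function.Injective (fun q : T => ((A q, B q) : α × α)) := by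
      intro p q hpq
      simp only [Prod.mk.injEq] at hpq
      apply Subtype.ext
      rw [(hAB p).2.2, (hAB q).2.2, hpq.1, hpq.2]
    calc Cardinal.mk T ≤ Cardinal.mk (α × α) := Cardinal.mk_le_of_injective hinj
      _ = Cardinal.mk α * Cardinal.mk α := by simp
      _ = Cardinal.mk α := Cardinal.mul_eq_self hκ
  -- lower bound
  have hge : Cardinal.mk α ≤ Cardinal.mk T := by
    by_contra hcon
    push_neg at hcon
    set S : Set α := {x : α | ∃ y, x ≠ y ∧ ¬ R x y} with hSdef
    -- S injects into T ⊕ T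
    have hSwit : ∀ x : S, ∃ y, (x : α) ≠ y ∧ ¬ R x y := fun x => x.2
    have hSle : Cardinal.mk S ≤ Cardinal.mk T + Cardinal.mk T := by
      have hmemT : ∀ x : S, ({(x : α), (hSwit x).choose} : Set α) ∈ T := by
        intro x
        exact ⟨x, (hSwit x).choose, (hSwit x).choose_spec.1, (hSwit x).choose_spec.2, rfl⟩
      let P : S → T := fun x => ⟨{(x : α), (hSwit x).choose}, hmemT x⟩
      have hxP : ∀ x : S, (x : α) ∈ (P x : Set α) := fun x => Set.mem_insert _ _
      let g : S → T ⊕ T := fun x => if (x : α) = A (P x) then Sum.inl (P x) else Sum.inr (P x)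
      have hginj : Function.Injective g := by
        intro x y hxy
        simp only [g] at hxy
        by_cases hx : (x : α) = A (P x) <;> by_cases hy : (y : α) = A (P y) <;>
          simp [hx, hy] at hxy
        · apply Subtype.ext
          rw [hx, hy, hxy]
        · -- both not equal to A, so both equal B
          apply Subtype.ext
          have h1 : (x : α) ∈ (P x : Set α) := hxP x
          have h2 : (y : α) ∈ (P y : Set α) := hxP y
          rw [hxy] at h1
          rw [(hAB (P y)).2.2] at h1 h2
          rw [hxy] at hx
          rcases h1 with h1 | h1
          · exact absurd h1 hx
          · rcases h2 with h2 | h2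
            · exact absurd h2 hy
            · rw [Set.mem_singleton_iff] at h1 h2
              rw [h1, h2]
      calc Cardinal.mk S ≤ Cardinal.mk (T ⊕ T) := Cardinal.mk_le_of_injective hginj
        _ = Cardinal.mk T + Cardinal.mk T := by simp
    have hSlt : Cardinal.mk S < Cardinal.mk α :=
      lt_of_le_of_lt hSle (Cardinal.add_lt_of_lt hκ hcon hcon)
    -- complement of S is infinite
    have hScinf : Sᶜ.Infinite := by
      intro hfin
      have h1 : Cardinal.mk (Sᶜ : Set α) < Cardinal.aleph0 := hfin.lt_aleph0
      have h2 : Cardinal.mk (S ∪ Sᶜ : Set α) ≤ Cardinal.mk S + Cardinal.mk (Sᶜ : Set α) :=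
        Cardinal.mk_union_le _ _
      rw [Set.union_compl_self, Cardinal.mk_univ] at h2
      exact absurd h2 (not_le.mpr (Cardinal.add_lt_of_lt hκ hSlt (lt_of_lt_of_le h1 hκ)))
    obtain ⟨u, hu, v, hv, huv⟩ := hScinf.nontrivial
    -- key fact
    have key : ∀ w y : α, w ∉ S → w ≠ y → R w y := by
      intro w y hw hwy
      by_contra h
      exact hw ⟨y, hwy, h⟩
    let f : α → α := fun z => Equiv.swap u v z
    have hmem : ∀ z, f z ∉ S ∨ f z = z := by
      intro z
      by_cases hz : z = u
      · left; simp only [f, hz, Equiv.swap_apply_left]; exact hv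
      · by_cases hz' : z = v
        · left; simp only [f, hz', Equiv.swap_apply_right]; exact hu
        · right; simp only [f, Equiv.swap_apply_of_ne_of_ne hz hz']
    have hf : ∀ x y, R x y → R (f x) (f y) := by
      intro x y hxy
      have hne : x ≠ y := by
        intro h; rw [h] at hxy; exact hirr y hxy
      have fne : f x ≠ f y := fun h => hne ((Equiv.swap u v).injective h)
      rcases hmem x with hx | hx
      · exact key _ _ hx fne
      · rcases hmem y with hy | hy
        · exact hsym _ _ (key _ _ hy (Ne.symm fne))
        · rw [hx, hy]; exact hxy
    have hfid := hrig f hf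
    have : f u = u := by rw [hfid]; rfl
    simp only [f, Equiv.swap_apply_left] at this
    exact huv this.symm
  exact le_antisymm hle hge
end

section
/- Let κ be an infinite cardinal and R a rigid symmetric relation on κ. Then the family Φ of relations S ⊆ κ × κ satisfying: R ⊆ S; for all distinct α,β, (α,β) ∈ S or (β,α) ∈ S; and if both (α,β) ∈ S and (β,α) ∈ S then (α,β) ∈ R; has cardinality 2^κ. -/
open Cardinal

/-- If a symmetric relation is rigid on an infinite type, then (w.r.t. any linear order)
there are `#α` many incomparable increasing pairs. -/
lemma aux_mk_pairs {α : Type*} [Infinite α] [LinearOrder α] (R : α → α → Prop)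
    (hsym : ∀ a b, R a b → R b a)
    (hrig : ∀ f : α → α, (∀ x y, R x y → R (f x) (f y)) → f = id) :
    #α ≤ #{p : α × α | p.1 < p.2 ∧ ¬ R p.1 p.2} := by
  classical
  set P : Set (α × α) := {p | p.1 < p.2 ∧ ¬ R p.1 p.2} with hPdef
  by_contra hlt
  push_neg at hlt
  set V : Set α := {a | ∃ b, b ≠ a ∧ ¬ R a b} with hVdef
  have hch : ∀ a : V, ∃ b, b ≠ (a : α) ∧ ¬ R (a : α) b := fun a => a.2
  have hVle : #V ≤ #P + #P := by
    have hinj : ∃ g : V → (P ⊕ P), Function.Injective g := by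
      refine ⟨fun a =>
        if h : (a : α) < Classical.choose (hch a) then
          Sum.inl ⟨((a : α), Classical.choose (hch a)),
            ⟨h, (Classical.choose_spec (hch a)).2⟩⟩
        else
          Sum.inr ⟨(Classical.choose (hch a), (a : α)),
            ⟨lt_of_le_of_ne (not_lt.mp h) (Classical.choose_spec (hch a)).1,
              fun hr => (Classical.choose_spec (hch a)).2 (hsym _ _ hr)⟩⟩, ?_⟩
      intro a a' h
      by_cases h1 : (a : α) < Classical.choose (hch a) <;>
        by_cases h2 : (a' : α) < Classical.choose (hch a') <;>
        simp only [h1, h2, dif_pos, dif_neg, not_false_iff] at h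
      · have := congrArg (fun x : P => (x : α × α).1) (Sum.inl.inj h)
        exact Subtype.ext this
      · exact absurd h (by simp)
      · exact absurd h (by simp)
      · have := congrArg (fun x : P => (x : α × α).2) (Sum.inr.inj h)
        exact Subtype.ext this
    obtain ⟨g, hg⟩ := hinj
    calc #V ≤ #(P ⊕ P : Type _) := mk_le_of_injective hg
      _ = #P + #P := by simp
  have hVlt : #V < #α := lt_of_le_of_lt hVle (Cardinal.add_lt_of_lt (aleph0_le_mk α) hlt hlt)
  have hVc : #α ≤ #(↥Vᶜ) := by
    by_contra hc
    push_neg at hc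
    have hsum := Cardinal.mk_sum_compl V
    have hlt2 : #V + #(↥Vᶜ) < #α := Cardinal.add_lt_of_lt (aleph0_le_mk α) hVlt hc
    rw [hsum] at hlt2
    exact lt_irrefl _ hlt2
  have hVcInf : (Vᶜ : Set α).Infinite := by
    rw [← Set.infinite_coe_iff, Cardinal.infinite_iff]
    exact le_trans (aleph0_le_mk α) hVc
  have hsplit : Vᶜ = {a ∈ Vᶜ | R a a} ∪ {a ∈ Vᶜ | ¬ R a a} := by
    ext a; by_cases h : R a a <;> simp [h]
  have hor : ({a ∈ Vᶜ | R a a}).Infinite ∨ ({a ∈ Vᶜ | ¬ R a a}).Infinite := by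
    rw [← Set.infinite_union, ← hsplit]; exact hVcInf
  have hpair : ∃ a b : α, a ∈ Vᶜ ∧ b ∈ Vᶜ ∧ a ≠ b ∧ (R a a ↔ R b b) := by
    rcases hor with h | h
    · obtain ⟨a, ha, b, hb, hne⟩ := h.nontrivial
      exact ⟨a, b, ha.1, hb.1, hne, by simp [ha.2, hb.2]⟩
    · obtain ⟨a, ha, b, hb, hne⟩ := h.nontrivial
      exact ⟨a, b, ha.1, hb.1, hne, by simp [ha.2, hb.2]⟩
  obtain ⟨a, b, ha, hb, hab, hloop⟩ := hpair
  -- a and b are adjacent to everything else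
  have haU : ∀ c, c ≠ a → R a c := by
    intro c hc
    by_contra hr
    exact ha ⟨c, hc, hr⟩
  have hbU : ∀ c, c ≠ b → R b c := by
    intro c hc
    by_contra hr
    exact hb ⟨c, hc, hr⟩
  -- the swap is an endomorphism
  have key : ∀ x y, R x y → R (Equiv.swap a b x) (Equiv.swap a b y) := by
    intro x y hxy
    rcases eq_or_ne x a with hxa | hxa
    · rw [hxa] at hxy ⊢
      rw [Equiv.swap_apply_left]
      rcases eq_or_ne y a with hya | hya
      · rw [hya] at hxy ⊢
        rw [Equiv.swap_apply_left]
        exact hloop.mp hxy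
      · rcases eq_or_ne y b with hyb | hyb
        · rw [hyb] at hxy ⊢
          rw [Equiv.swap_apply_right]
          exact hsym _ _ hxy
        · rw [Equiv.swap_apply_of_ne_of_ne hya hyb]
          exact hbU y hyb
    · rcases eq_or_ne x b with hxb | hxb
      · rw [hxb] at hxy ⊢
        rw [Equiv.swap_apply_right]
        rcases eq_or_ne y a with hya | hya
        · rw [hya] at hxy ⊢
          rw [Equiv.swap_apply_left]
          exact hsym _ _ hxy
        · rcases eq_or_ne y b with hyb | hyb
          · rw [hyb] at hxy ⊢
            rw [Equiv.swap_apply_right]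
            exact hloop.mpr hxy
          · rw [Equiv.swap_apply_of_ne_of_ne hya hyb]
            exact haU y hya
      · rw [Equiv.swap_apply_of_ne_of_ne hxa hxb]
        rcases eq_or_ne y a with hya | hya
        · rw [hya] at hxy ⊢
          rw [Equiv.swap_apply_left]
          exact hsym _ _ (hbU x hxb)
        · rcases eq_or_ne y b with hyb | hyb
          · rw [hyb] at hxy ⊢
            rw [Equiv.swap_apply_right]
            exact hsym _ _ (haU x hxa)
          · rwa [Equiv.swap_apply_of_ne_of_ne hya hyb]
  have := hrig (Equiv.swap a b) key
  have h2 : Equiv.swap a b a = a := by rw [this]; rfl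
  rw [Equiv.swap_apply_left] at h2
  exact hab h2.symm

theorem stmt_4 {α : Type*} [Infinite α] (R : α → α → Prop)
    (hsym : ∀ a b, R a b → R b a)
    (hrig : ∀ f : α → α, (∀ x y, R x y → R (f x) (f y)) → f = id) :
    Cardinal.mk {S : α → α → Prop |
        (∀ a b, R a b → S a b) ∧
        (∀ a b, a ≠ b → S a b ∨ S b a) ∧
        (∀ a b, S a b → S b a → R a b)} = 2 ^ Cardinal.mk α := by
  classical
  letI : LinearOrder α := linearOrderOfSTO WellOrderingRel
  set Φ : Set (α → α → Prop) := {S |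
        (∀ a b, R a b → S a b) ∧
        (∀ a b, a ≠ b → S a b ∨ S b a) ∧
        (∀ a b, S a b → S b a → R a b)} with hΦdef
  set P : Set (α × α) := {p | p.1 < p.2 ∧ ¬ R p.1 p.2} with hPdef
  have hPge : #α ≤ #P := aux_mk_pairs R hsym hrig
  -- upper bound
  have hub : #Φ ≤ 2 ^ #α := by
    calc #Φ ≤ #(α → α → Prop) := mk_set_le _
      _ = #(α × α → Prop) := (mk_congr (Equiv.curry α α Prop)).symm
      _ = 2 ^ #(α × α) := mk_set
      _ = 2 ^ (#α * #α) := by simp [mk_prod]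
      _ = 2 ^ #α := by rw [Cardinal.mul_eq_self (aleph0_le_mk α)]
  -- lower bound: injection from Set ↥P into Φ
  have hlb : 2 ^ #α ≤ #Φ := by
    have h2P : 2 ^ #α ≤ #(Set ↥P) := by
      rw [mk_set]
      exact power_le_power_left (by norm_num) hPge
    refine le_trans h2P ?_
    have : ∃ F : Set ↥P → Φ, Function.Injective F := by
      refine ⟨fun T => ⟨fun a b => R a b ∨ (∃ h : (a, b) ∈ P, (⟨(a, b), h⟩ : ↥P) ∈ T)
          ∨ (∃ h : (b, a) ∈ P, (⟨(b, a), h⟩ : ↥P) ∉ T), ?_, ?_, ?_⟩, ?_⟩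
      · intro a b hr
        exact Or.inl hr
      · -- totality
        intro a b hne
        by_cases hr : R a b
        · exact Or.inl (Or.inl hr)
        · have hrba : ¬ R b a := fun h => hr (hsym _ _ h)
          rcases lt_or_gt_of_ne hne with hlt | hgt
          · have hp : (a, b) ∈ P := ⟨hlt, hr⟩
            by_cases ht : (⟨(a, b), hp⟩ : ↥P) ∈ T
            · exact Or.inl (Or.inr (Or.inl ⟨hp, ht⟩))
            · exact Or.inr (Or.inr (Or.inr ⟨hp, ht⟩))
          · have hp : (b, a) ∈ P := ⟨hgt, hrba⟩
            by_cases ht : (⟨(b, a), hp⟩ : ↥P) ∈ T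
            · exact Or.inr (Or.inr (Or.inl ⟨hp, ht⟩))
            · exact Or.inl (Or.inr (Or.inr ⟨hp, ht⟩))
      · -- antisymmetry into R
        intro a b hab hba
        by_contra hr
        have hrba : ¬ R b a := fun h => hr (hsym _ _ h)
        rcases hab with h | h | h
        · exact hr h
        · obtain ⟨hp, ht⟩ := h
          rcases hba with h' | h' | h'
          · exact hrba h'
          · obtain ⟨hp', _⟩ := h'
            exact absurd hp'.1 (lt_asymm hp.1)
          · obtain ⟨hp', ht'⟩ := h'
            exact ht' ht
        · obtain ⟨hp, ht⟩ := h
          rcases hba with h' | h' | h'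
          · exact hrba h'
          · obtain ⟨hp', ht'⟩ := h'
            exact ht ht'
          · obtain ⟨hp', _⟩ := h'
            exact absurd hp'.1 (lt_asymm hp.1)
      · -- injectivity
        intro T T' hTT
        have hfun := congrArg Subtype.val hTT
        ext p
        obtain ⟨⟨a, b⟩, hp⟩ := p
        have hlt : a < b := hp.1
        have hnr : ¬ R a b := hp.2
        constructor
        · intro ht
          have hS : R a b ∨ (∃ h : (a, b) ∈ P, (⟨(a, b), h⟩ : ↥P) ∈ T')
              ∨ (∃ h : (b, a) ∈ P, (⟨(b, a), h⟩ : ↥P) ∉ T') :=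
            (iff_of_eq (congrFun (congrFun hfun a) b)).mp (Or.inr (Or.inl ⟨hp, ht⟩))
          rcases hS with h | h | h
          · exact absurd h hnr
          · exact h.2
          · exact absurd h.1.1 (lt_asymm hlt)
        · intro ht
          have hS : R a b ∨ (∃ h : (a, b) ∈ P, (⟨(a, b), h⟩ : ↥P) ∈ T)
              ∨ (∃ h : (b, a) ∈ P, (⟨(b, a), h⟩ : ↥P) ∉ T) :=
            (iff_of_eq (congrFun (congrFun hfun a) b)).mpr (Or.inr (Or.inl ⟨hp, ht⟩))
          rcases hS with h | h | h
          · exact absurd h hnr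
          · exact h.2
          · exact absurd h.1.1 (lt_asymm hlt)
    obtain ⟨F, hF⟩ := this
    exact mk_le_of_injective hF
  exact le_antisymm hub hlb
end

section
/- Let κ be an infinite cardinal, A a set with card A ≤ 2^κ. Then there exists a relation R ⊆ A × A satisfying condition (κ◇): for every x ∈ A there exists a set A(x) with {x} ⊆ A(x) ⊆ A and card A(x) ≤ κ, such that every map f : A(x) → A that is a homomorphism of R (i.e., (u,v) ∈ R with u,v ∈ A(x) implies (f(u),f(v)) ∈ R) equals the identity on A(x). -/
universe u

theorem stmt_5 (κ : Cardinal.{u}) (hκ : Cardinal.aleph0 ≤ κ)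
    (hex : ∀ μ : Cardinal.{u}, Cardinal.aleph0 ≤ μ →
      ∃ R : μ.out → μ.out → Prop, (∀ a b, R a b → R b a) ∧
        ∀ f : μ.out → μ.out, (∀ x y, R x y → R (f x) (f y)) → f = id)
    {A : Type u} (hA : Cardinal.mk A ≤ 2 ^ κ) :
    ∃ R : A → A → Prop, ∀ x : A, ∃ B : Set A, x ∈ B ∧ Cardinal.mk B ≤ κ ∧
      ∀ f : A → A, (∀ u ∈ B, ∀ v ∈ B, R u v → R (f u) (f v)) →
        ∀ y ∈ B, f y = y := by
  classical
  by_cases hbig : κ ≤ Cardinal.mk A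
  · -- main case: κ ≤ #A ≤ 2^κ
    obtain ⟨S, hSsym, hSrig⟩ := hex κ hκ
    haveI hinf : Infinite κ.out :=
      Cardinal.infinite_iff.mpr (by rw [Cardinal.mk_out]; exact hκ)
    have hnoloop : ∀ u, ¬ S u u := by
      intro u hu
      have h := hSrig (fun _ => u) (fun x y _ => hu)
      obtain ⟨a, b, hab⟩ := exists_pair_ne κ.out
      exact hab ((congrFun h a).symm.trans (congrFun h b))
    have hnbr : ∀ u, ∃ v, S u v := by
      intro u
      by_contra h
      push_neg at h
      obtain ⟨w, hw⟩ := exists_ne u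
      have hg : ∀ x y, S x y → S (ite (x = u) w x) (ite (y = u) w y) := by
        intro x y hxy
        rcases eq_or_ne x u with rfl | hx
        · exact absurd hxy (h y)
        rcases eq_or_ne y u with rfl | hy
        · exact absurd (hSsym _ _ hxy) (h x)
        simpa [hx, hy] using hxy
      have h1 := hSrig (fun z => ite (z = u) w z) hg
      have h2 := congrFun h1 u
      simp at h2
      exact hw h2
    obtain ⟨ι⟩ : Nonempty (κ.out ↪ A) :=
      (Cardinal.le_def _ _).mp (by rw [Cardinal.mk_out]; exact hbig)
    obtain ⟨χ⟩ : Nonempty ({a : A // a ∉ Set.range ι} ↪ Set κ.out) := by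
      refine (Cardinal.le_def _ _).mp ?_
      rw [Cardinal.mk_set, Cardinal.mk_out]
      exact le_trans (Cardinal.mk_subtype_le _) hA
    refine ⟨fun a b =>
      (∃ i j, S i j ∧ a = ι i ∧ b = ι j) ∨
      (∃ i, ∃ h : b ∉ Set.range ι, a = ι i ∧ i ∈ χ ⟨b, h⟩) ∨
      (∃ h : a ∉ Set.range ι, ∃ j, b = ι j ∧ j ∉ χ ⟨a, h⟩), ?_⟩
    set R : A → A → Prop := fun a b =>
      (∃ i j, S i j ∧ a = ι i ∧ b = ι j) ∨
      (∃ i, ∃ h : b ∉ Set.range ι, a = ι i ∧ i ∈ χ ⟨b, h⟩) ∨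
      (∃ h : a ∉ Set.range ι, ∃ j, b = ι j ∧ j ∉ χ ⟨a, h⟩) with hRdef
    intro x
    refine ⟨Set.range ι ∪ {x}, Or.inr rfl, ?_, ?_⟩
    · calc Cardinal.mk ↑(Set.range ι ∪ {x})
          ≤ Cardinal.mk ↑(Set.range ι) + Cardinal.mk ({x} : Set A) :=
            Cardinal.mk_union_le _ _
        _ = κ + 1 := by rw [Cardinal.mk_range_eq _ ι.injective, Cardinal.mk_out,
            Cardinal.mk_singleton]
        _ = κ := Cardinal.add_one_eq hκ
    intro f hf
    have hmemK : ∀ i, ι i ∈ Set.range ι ∪ {x} := fun i => Or.inl ⟨i, rfl⟩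
    have hmemx : x ∈ Set.range ι ∪ {x} := Or.inr rfl
    -- Step 1: f maps the copy of κ into itself
    have h1 : ∀ i, f (ι i) ∈ Set.range ι := by
      intro i
      obtain ⟨j, hij⟩ := hnbr i
      have e1 : R (f (ι i)) (f (ι j)) :=
        hf _ (hmemK i) _ (hmemK j) (Or.inl ⟨i, j, hij, rfl, rfl⟩)
      have e2 : R (f (ι j)) (f (ι i)) :=
        hf _ (hmemK j) _ (hmemK i) (Or.inl ⟨j, i, hSsym _ _ hij, rfl, rfl⟩)
      rcases e1 with ⟨i', j', _, ha, _⟩ | ⟨i', hb, ha, _⟩ | ⟨ha, j', hbj, hnotin⟩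
      · exact ⟨i', ha.symm⟩
      · exact ⟨i', ha.symm⟩
      · exfalso
        rcases e2 with ⟨p, q, _, _, h2'⟩ | ⟨p, hmem, h1', hin⟩ | ⟨hja, q, _, _⟩
        · exact ha ⟨q, h2'.symm⟩
        · have hpj : p = j' := ι.injective (h1'.symm.trans hbj)
          subst hpj
          exact hnotin hin
        · exact hja ⟨j', hbj.symm⟩
    choose g hg using h1
    have hgid : g = id := by
      refine hSrig g ?_
      intro p q hpq
      have e1 : R (f (ι p)) (f (ι q)) :=
        hf _ (hmemK p) _ (hmemK q) (Or.inl ⟨p, q, hpq, rfl, rfl⟩)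
      rw [← hg p, ← hg q] at e1
      rcases e1 with ⟨i', j', hS, h1', h2'⟩ | ⟨i', hb, _, _⟩ | ⟨ha, _, _, _⟩
      · rw [ι.injective h1', ι.injective h2']
        exact hS
      · exact absurd ⟨g q, rfl⟩ hb
      · exact absurd ⟨g p, rfl⟩ ha
    have hfix : ∀ i, f (ι i) = ι i := by
      intro i
      rw [← hg i, hgid]
      rfl
    -- now handle y ∈ B
    intro y hy
    have hxcase : f x = x := by
      by_cases hx : x ∈ Set.range ι
      · obtain ⟨i, rfl⟩ := hx
        exact hfix i
      -- x outside the spine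
      have hfx : f x ∉ Set.range ι := by
        rintro ⟨w, hw⟩
        by_cases hwχ : w ∈ χ ⟨x, hx⟩
        · have hstep : R (f (ι w)) (f x) :=
            hf _ (hmemK w) _ hmemx (Or.inr (Or.inl ⟨w, hx, rfl, hwχ⟩))
          rw [hfix w, ← hw] at hstep
          rcases hstep with ⟨i', j', hS, h1', h2'⟩ | ⟨i', hb, _, _⟩ | ⟨ha, _, _, _⟩
          · rw [← ι.injective h1', ← ι.injective h2'] at hS
            exact hnoloop _ hS
          · exact hb ⟨w, rfl⟩
          · exact ha ⟨w, rfl⟩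
        · have hstep : R (f x) (f (ι w)) :=
            hf _ hmemx _ (hmemK w) (Or.inr (Or.inr ⟨hx, w, rfl, hwχ⟩))
          rw [hfix w, ← hw] at hstep
          rcases hstep with ⟨i', j', hS, h1', h2'⟩ | ⟨i', hb, _, _⟩ | ⟨ha, _, _, _⟩
          · rw [← ι.injective h1', ← ι.injective h2'] at hS
            exact hnoloop _ hS
          · exact hb ⟨w, rfl⟩
          · exact ha ⟨w, rfl⟩
      have hsub1 : ∀ i, i ∈ χ ⟨x, hx⟩ → i ∈ χ ⟨f x, hfx⟩ := by
        intro i hi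
        have hstep : R (f (ι i)) (f x) :=
          hf _ (hmemK i) _ hmemx (Or.inr (Or.inl ⟨i, hx, rfl, hi⟩))
        rw [hfix i] at hstep
        rcases hstep with ⟨i', j', _, _, h2'⟩ | ⟨i', hb, h1', hin⟩ | ⟨ha, _, _, _⟩
        · exact absurd ⟨j', h2'.symm⟩ hfx
        · rwa [ι.injective h1']
        · exact absurd ⟨i, rfl⟩ ha
      have hsub2 : ∀ i, i ∉ χ ⟨x, hx⟩ → i ∉ χ ⟨f x, hfx⟩ := by
        intro i hi
        have hstep : R (f x) (f (ι i)) :=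
          hf _ hmemx _ (hmemK i) (Or.inr (Or.inr ⟨hx, i, rfl, hi⟩))
        rw [hfix i] at hstep
        rcases hstep with ⟨i', j', _, h1', _⟩ | ⟨i', hb, h1', _⟩ | ⟨ha, j', h2', hnotin⟩
        · exact absurd ⟨i', h1'.symm⟩ hfx
        · exact absurd ⟨i', h1'.symm⟩ hfx
        · rwa [ι.injective h2']
      have hχeq : χ ⟨x, hx⟩ = χ ⟨f x, hfx⟩ := by
        ext i
        constructor
        · exact hsub1 i
        · intro h
          by_contra hni
          exact hsub2 i hni h
      have := χ.injective hχeq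
      have := congrArg Subtype.val this
      exact this.symm
    rcases hy with ⟨i, rfl⟩ | hy
    · exact hfix i
    · rw [Set.mem_singleton_iff] at hy
      subst hy
      exact hxcase
  · -- small case: #A ≤ κ
    have hsmall : Cardinal.mk A ≤ κ := (le_of_not_ge hbig)
    by_cases hinfA : Cardinal.aleph0 ≤ Cardinal.mk A
    · -- A infinite, #A ≤ κ : use a rigid relation on all of A
      obtain ⟨S, hSsym, hSrig⟩ := hex (Cardinal.mk A) hinfA
      obtain ⟨e⟩ : Nonempty (A ≃ (Cardinal.mk A).out) :=
        Cardinal.eq.mp (Cardinal.mk_out _).symm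
      refine ⟨fun a b => S (e a) (e b), fun x => ⟨Set.univ, trivial, ?_, ?_⟩⟩
      · rw [Cardinal.mk_univ]; exact hsmall
      intro f hf y _
      have hg : ∀ i j, S i j → S (e (f (e.symm i))) (e (f (e.symm j))) := by
        intro i j hij
        exact hf (e.symm i) trivial (e.symm j) trivial (by simpa using hij)
      have h1 := hSrig (fun i => e (f (e.symm i))) hg
      have h2 := congrFun h1 (e y)
      simp only [Equiv.symm_apply_apply, id_eq] at h2
      exact e.injective h2
    · -- A finite : use the successor relation of a linear order
      have hfin : Finite A := Cardinal.lt_aleph0_iff_finite.mp (lt_of_not_ge hinfA)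
      obtain ⟨n, ⟨e⟩⟩ := Finite.exists_equiv_fin A
      refine ⟨fun a b => (e b : ℕ) = (e a : ℕ) + 1, fun x => ⟨Set.univ, trivial, ?_, ?_⟩⟩
      · rw [Cardinal.mk_univ]; exact hsmall
      intro f hf y _
      have hn : 0 < n := (e x).pos
      set g : Fin n → Fin n := fun i => e (f (e.symm i)) with hgdef
      have hstep : ∀ i j : Fin n, (j : ℕ) = (i : ℕ) + 1 → (g j : ℕ) = (g i : ℕ) + 1 := by
        intro i j hij
        exact hf (e.symm i) trivial (e.symm j) trivial (by simpa using hij)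
      have key : ∀ m, ∀ hm : m < n, (g ⟨m, hm⟩ : ℕ) = (g ⟨0, hn⟩ : ℕ) + m := by
        intro m
        induction m with
        | zero => intro hm; rfl
        | succ k ih =>
          intro hm
          have hk : k < n := Nat.lt_of_succ_lt hm
          have h3 := hstep ⟨k, hk⟩ ⟨k + 1, hm⟩ rfl
          rw [h3, ih hk]; omega
      have hg0 : (g ⟨0, hn⟩ : ℕ) = 0 := by
        have hlast := key (n - 1) (by omega)
        have hlt := (g ⟨n - 1, by omega⟩).isLt
        omega
      have hgi : g (e y) = e y := by
        have hkey := key (e y : ℕ) (e y).isLt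
        rw [Fin.eta, hg0, Nat.zero_add] at hkey
        exact Fin.ext hkey
      have h4 : e (f y) = e y := by
        rw [hgdef] at hgi
        simpa using hgi
      exact e.injective h4
end

section
/- Let κ be an infinite cardinal. If a relation R ⊆ A × A satisfies condition (κ◇), then card A ≤ 2^κ. -/
universe u

theorem stmt_8 {A : Type u} (κ : Cardinal.{u}) (hκ : Cardinal.aleph0 ≤ κ)
    (R : A → A → Prop)
    (hcond : ∀ x : A, ∃ B : Set A, x ∈ B ∧ Cardinal.mk B ≤ κ ∧
      ∀ f : A → A, (∀ u ∈ B, ∀ v ∈ B, R u v → R (f u) (f v)) →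
        ∀ y ∈ B, f y = y) :
    Cardinal.mk A ≤ 2 ^ κ := by
  classical
  set T := κ.out with hT
  choose B hxB hBκ hid using hcond
  have hex : ∀ x : A, ∃ i : A → T, ∀ u ∈ B x, ∀ v ∈ B x, i u = i v → u = v := by
    intro x
    have hle : Cardinal.mk (B x) ≤ Cardinal.mk T := by
      rw [Cardinal.mk_out]; exact hBκ x
    obtain ⟨e⟩ := (Cardinal.le_def _ _).mp hle
    exact ⟨fun a => if h : a ∈ B x then e ⟨a, h⟩ else e ⟨x, hxB x⟩,
      fun u hu v hv huv => by
        simp only [dif_pos hu, dif_pos hv] at huv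
        exact Subtype.mk_eq_mk.mp (e.injective huv)⟩
  choose i hi using hex
  set c : A → Set (T × T) × T := fun x =>
    ({ p | ∃ u ∈ B x, ∃ v ∈ B x, i x u = p.1 ∧ i x v = p.2 ∧ R u v }, i x x) with hc
  have hcinj : Function.Injective c := by
    intro x y hxy
    have hS : { p : T × T | ∃ u ∈ B x, ∃ v ∈ B x, i x u = p.1 ∧ i x v = p.2 ∧ R u v }
        = { p : T × T | ∃ u ∈ B y, ∃ v ∈ B y, i y u = p.1 ∧ i y v = p.2 ∧ R u v } :=
      congrArg Prod.fst hxy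
    have hpt : i x x = i y y := congrArg Prod.snd hxy
    set f : A → A := fun a => if h : ∃ u, u ∈ B y ∧ i y u = i x a then h.choose else a
      with hf
    have hfval : ∀ a, ∀ u ∈ B y, i y u = i x a → f a = u := by
      intro a u hu hiu
      have h : ∃ u, u ∈ B y ∧ i y u = i x a := ⟨u, hu, hiu⟩
      have hsp := h.choose_spec
      simp only [hf, dif_pos h]
      exact hi y _ hsp.1 _ hu (hsp.2.trans hiu.symm)
    have hpres : ∀ u ∈ B x, ∀ v ∈ B x, R u v → R (f u) (f v) := by
      intro u hu v hv huv
      have hmem : ((i x u, i x v) : T × T) ∈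
          { p : T × T | ∃ u ∈ B x, ∃ v ∈ B x, i x u = p.1 ∧ i x v = p.2 ∧ R u v } :=
        ⟨u, hu, v, hv, rfl, rfl, huv⟩
      rw [hS] at hmem
      obtain ⟨u', hu', v', hv', h1, h2, hR⟩ := hmem
      rw [hfval u u' hu' h1, hfval v v' hv' h2]
      exact hR
    have hfx : f x = x := hid x f hpres x (hxB x)
    have hfy : f x = y := hfval x y (hxB y) hpt.symm
    rw [hfx] at hfy
    exact hfy
  have h1 : Cardinal.mk A ≤ Cardinal.mk (Set (T × T) × T) :=
    Cardinal.mk_le_of_injective hcinj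
  have h2 : Cardinal.mk (Set (T × T) × T) = 2 ^ (κ * κ) * κ := by
    simp only [Cardinal.mk_prod, Cardinal.mk_set, Cardinal.lift_id]
    rw [hT, Cardinal.mk_out]
  have hκκ : κ * κ = κ := Cardinal.mul_eq_self hκ
  have h2κ : Cardinal.aleph0 ≤ 2 ^ κ := hκ.trans (Cardinal.cantor κ).le
  have h3 : 2 ^ (κ * κ) * κ ≤ 2 ^ κ := by
    rw [hκκ]
    calc 2 ^ κ * κ ≤ 2 ^ κ * 2 ^ κ :=
          mul_le_mul_right (Cardinal.cantor κ).le _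
      _ = 2 ^ κ := Cardinal.mul_eq_self h2κ
  exact h1.trans (h2 ▸ h3)
end

section
/- Let κ ≠ 0 be a limit cardinal. If a relation R ⊆ A × A satisfies condition (κ◇◇), then card A ≤ sup{2^α : α a cardinal, α < κ}. -/
universe u

open Cardinal

private lemma key9 {A : Type u} (R : A → A → Prop) {Bx By : Set A}
    {γx γy : Type u} (hγ : γx = γy)
    (ex : ↥Bx ≃ γx) (ey : ↥By ≃ γy) {x y : A} (hx : x ∈ Bx) (hy : y ∈ By)
    (hs : HEq
      (ULift.up.{u+1} ((fun a b => R ((ex.symm a) : A) ((ex.symm b) : A), ex ⟨x, hx⟩) :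
        (γx → γx → Prop) × γx))
      (ULift.up.{u+1} ((fun a b => R ((ey.symm a) : A) ((ey.symm b) : A), ey ⟨y, hy⟩) :
        (γy → γy → Prop) × γy))) :
    ∃ f : A → A, (∀ u ∈ Bx, ∀ v ∈ Bx, R u v → R (f u) (f v)) ∧ f x = y := by
  subst hγ
  have hs' := congrArg ULift.down (eq_of_heq hs)
  have h1 : (fun a b => R ((ex.symm a) : A) ((ex.symm b) : A))
      = (fun a b => R ((ey.symm a) : A) ((ey.symm b) : A)) := congrArg Prod.fst hs'
  have h2 : ex ⟨x, hx⟩ = ey ⟨y, hy⟩ := congrArg Prod.snd hs'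
  classical
  refine ⟨fun a => if h : a ∈ Bx then ((ey.symm (ex ⟨a, h⟩)) : A) else a, ?_, ?_⟩
  · intro u hu v hv huv
    simp only [dif_pos hu, dif_pos hv]
    have := congrFun (congrFun h1 (ex ⟨u, hu⟩)) (ex ⟨v, hv⟩)
    rw [← this]
    simpa using huv
  · simp only [dif_pos hx, h2, Equiv.symm_apply_apply]

theorem stmt_9 {A : Type u} (κ : Cardinal.{u}) (hκ : (κ ≠ 0 ∧ Order.IsSuccLimit κ))
    (R : A → A → Prop)
    (hcond : ∀ x : A, ∃ B : Set A, x ∈ B ∧ Cardinal.mk B < κ ∧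
      ∀ f : A → A, (∀ u ∈ B, ∀ v ∈ B, R u v → R (f u) (f v)) →
        ∀ y ∈ B, f y = y) :
    Cardinal.mk A ≤ ⨆ α : Set.Iio κ, 2 ^ (α : Cardinal.{u}) := by
  classical
  choose B hxB hBκ hrig using hcond
  set S : Cardinal.{u} := ⨆ α : Set.Iio κ, 2 ^ (α : Cardinal.{u}) with hSdef
  have hκ0 : ℵ₀ ≤ κ := Cardinal.aleph0_le_of_isSuccLimit hκ.2
  have hbdd : BddAbove (Set.range fun α : Set.Iio κ => (2 ^ (α : Cardinal.{u}) : Cardinal.{u})) := by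
    refine ⟨(2 : Cardinal.{u}) ^ κ, ?_⟩
    rintro _ ⟨α, rfl⟩
    exact power_le_power_left (by norm_num) (le_of_lt α.2)
  have h2S : ∀ d : Cardinal.{u}, d < κ → 2 ^ d ≤ S := fun d hd => le_ciSup hbdd ⟨d, hd⟩
  have hκS : κ ≤ S := by
    by_contra h
    push_neg at h
    exact absurd (h2S S h) (not_le.2 (cantor S))
  have hS0 : ℵ₀ ≤ S := hκ0.trans hκS
  -- the invariant
  let c : A → Cardinal.{u} := fun x => Cardinal.mk (B x)
  have hne : ∀ x, Nonempty (↥(B x) ≃ (c x).out) := by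
    intro x
    rw [← Cardinal.eq, Cardinal.mk_out]
  let e : ∀ x, ↥(B x) ≃ (c x).out := fun x => (hne x).some
  let F : Set.Iio κ → Type (u+1) := fun i =>
    ULift.{u+1} (((i : Cardinal.{u}).out → (i : Cardinal.{u}).out → Prop) × (i : Cardinal.{u}).out)
  let Φ : A → Σ i, F i := fun x =>
    ⟨⟨c x, hBκ x⟩, ULift.up (fun a b => R (((e x).symm a) : A) (((e x).symm b) : A),
      e x ⟨x, hxB x⟩)⟩
  have hinj : Function.Injective Φ := by
    intro x y h
    obtain ⟨h1, h2⟩ := Sigma.mk.inj_iff.mp h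
    have hc : c x = c y := congrArg Subtype.val h1
    obtain ⟨f, hf, hfx⟩ := key9 R (congrArg Quotient.out hc) (e x) (e y)
      (hxB x) (hxB y) h2
    have := hrig x f hf x (hxB x)
    rw [this] at hfx
    exact hfx
  have step1 : Cardinal.lift.{u+1} (Cardinal.mk A) ≤ Cardinal.mk (Σ i, F i) := by
    rw [← Cardinal.mk_uLift]
    exact Cardinal.mk_le_of_injective (f := Φ ∘ ULift.down)
      (hinj.comp (fun a b => by intro h; cases a; cases b; simpa using h))
  have hfib : ∀ i : Set.Iio κ, Cardinal.mk (F i) ≤ Cardinal.lift.{u+1} S := by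
    rintro ⟨g, hg⟩
    have hmk : Cardinal.mk (F ⟨g, hg⟩) = Cardinal.lift.{u+1} (2 ^ (g * g) * g) := by
      simp only [F, Cardinal.mk_uLift, Cardinal.mk_prod, Cardinal.mk_arrow,
        Cardinal.mk_out, Cardinal.mk_Prop, Cardinal.lift_id, Cardinal.lift_mul,
        Cardinal.lift_uzero, Cardinal.lift_two, ← Cardinal.power_mul]
    rw [hmk, Cardinal.lift_le]
    calc 2 ^ (g * g) * g ≤ 2 ^ (g * g) * 2 ^ g := mul_le_mul_right (cantor g).le _
      _ = 2 ^ (g * g + g) := (power_add 2 (g * g) g).symm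
      _ ≤ S := h2S _ (add_lt_of_lt hκ0 (mul_lt_of_lt hκ0 hg hg) hg)
  have hIio : Cardinal.mk (Set.Iio κ) ≤ Cardinal.lift.{u+1} κ := by
    have hord : Cardinal.mk (Set.Iio κ.ord) = Cardinal.lift.{u+1} κ := by
      rw [Ordinal.mk_Iio_ordinal, Cardinal.card_ord]
    rw [← hord]
    refine Cardinal.mk_le_of_injective
      (f := fun a : Set.Iio κ => (⟨(a : Cardinal).ord, Cardinal.ord_lt_ord.2 a.2⟩ :
        Set.Iio κ.ord)) ?_
    intro a b h
    exact Subtype.ext (Cardinal.ord_injective (congrArg Subtype.val h))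
  have step2 : Cardinal.mk (Σ i, F i) ≤ Cardinal.lift.{u+1} κ * Cardinal.lift.{u+1} S := by
    rw [Cardinal.mk_sigma]
    calc Cardinal.sum (fun i => Cardinal.mk (F i))
        ≤ Cardinal.sum (fun _ : Set.Iio κ => Cardinal.lift.{u+1} S) :=
          Cardinal.sum_le_sum _ _ hfib
      _ = Cardinal.mk (Set.Iio κ) * Cardinal.lift.{u+1} S := Cardinal.sum_const' _ _
      _ ≤ Cardinal.lift.{u+1} κ * Cardinal.lift.{u+1} S := mul_le_mul_left hIio _
  have final : Cardinal.lift.{u+1} (Cardinal.mk A) ≤ Cardinal.lift.{u+1} S := by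
    refine step1.trans (step2.trans ?_)
    rw [← Cardinal.lift_mul, Cardinal.lift_le]
    calc κ * S ≤ S * S := mul_le_mul_left hκS _
      _ = S := mul_eq_self hS0
  exact Cardinal.lift_le.mp final
end

section
/- The relation R := {(i, i+1) : i ∈ ℕ} ∪ {(0,2)} on ℕ satisfies condition (ω◇◇): for every i ∈ ℕ, the finite set A(i) := {j ∈ ℕ : j ≤ i+2} has the property that every map f : A(i) → ℕ with (u,v) ∈ R, u,v ∈ A(i) implying (f(u),f(v)) ∈ R, is the identity on A(i). -/
theorem stmt_10 :
    ∀ i : ℕ, ∀ f : ℕ → ℕ,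
      (∀ u ∈ {j : ℕ | j ≤ i + 2}, ∀ v ∈ {j : ℕ | j ≤ i + 2},
        (v = u + 1 ∨ (u = 0 ∧ v = 2)) → (f v = f u + 1 ∨ (f u = 0 ∧ f v = 2))) →
      ∀ j ≤ i + 2, f j = j := by
  intro i f hf
  have m : ∀ k, k ≤ 2 → k ∈ {j : ℕ | j ≤ i + 2} := by
    intro k hk; simp only [Set.mem_setOf_eq]; omega
  have h01 := hf 0 (m 0 (by omega)) 1 (m 1 (by omega)) (Or.inl rfl)
  have h12 := hf 1 (m 1 (by omega)) 2 (m 2 (by omega)) (Or.inl rfl)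
  have h02 := hf 0 (m 0 (by omega)) 2 (m 2 (by omega)) (Or.inr ⟨rfl, rfl⟩)
  intro j hj
  induction j with
  | zero => omega
  | succ n ih =>
    have hn : n ≤ i + 2 := by omega
    have ihn := ih hn
    match n, ihn with
    | 0, _ => show f 1 = 1; omega
    | 1, _ => show f 2 = 2; omega
    | (k+2), ihn =>
      have hs := hf (k+2) (by simpa using hn) (k+3)
        (by simpa using hj) (Or.inl rfl)
      show f (k+3) = k+3
      omega
end

section
/- The relation R := {(i, i+1) : i ∈ ℕ} ∪ {(0,2)} on ℕ is rigid: the only map f : ℕ → ℕ such that (x,y) ∈ R implies (f(x),f(y)) ∈ R is the identity. -/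
theorem stmt_11 (f : ℕ → ℕ)
    (hf : ∀ x y : ℕ, (y = x + 1 ∨ (x = 0 ∧ y = 2)) →
      (f y = f x + 1 ∨ (f x = 0 ∧ f y = 2))) :
    ∀ n, f n = n := by
  have h01 := hf 0 1 (Or.inl rfl)
  have h12 := hf 1 2 (Or.inl rfl)
  have h02 := hf 0 2 (Or.inr ⟨rfl, rfl⟩)
  have h0 : f 0 = 0 ∧ f 1 = 1 := by omega
  intro n
  induction n with
  | zero => exact h0.1
  | succ k ih =>
    have h := hf k (k + 1) (Or.inl rfl)
    cases k with
    | zero => exact h0.2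
    | succ m => omega
end

section
/- Let κ be an infinite cardinal and suppose Ψ is a nonempty family of relations on κ such that (a) each S ∈ Ψ is rigid, (b) for distinct S₁, S₂ ∈ Ψ the identity is not a homomorphism ⟨κ,S₁⟩ → ⟨κ,S₂⟩, (c) each S ∈ Ψ satisfies: for all distinct α, β ∈ κ, (α,β) ∈ S or (β,α) ∈ S, and (d) every homomorphism ⟨κ,S₁⟩ → ⟨κ,S₂⟩ between members of Ψ is an endomorphism of some fixed rigid relation R. Define R_Ψ on κ × Ψ by ((α,S₁),(β,S₂)) ∈ R_Ψ iff S₁ = S₂ and (α,β) ∈ S₁. Then R_Ψ satisfies condition (κ◇): for every (λ,S₁) ∈ κ × Ψ, the set κ × {S₁} has cardinality κ and every R_Ψ-homomorphism f : κ × {S₁} → κ × Ψ is the identity. -/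
theorem stmt_12 {α : Type*} [Infinite α]
    (Ψ : Set (α → α → Prop)) (hne : Ψ.Nonempty)
    (R : α → α → Prop)
    (hRrig : ∀ f : α → α, (∀ x y, R x y → R (f x) (f y)) → f = id)
    (ha : ∀ S ∈ Ψ, ∀ f : α → α, (∀ x y, S x y → S (f x) (f y)) → f = id)
    (hb : ∀ S₁ ∈ Ψ, ∀ S₂ ∈ Ψ, S₁ ≠ S₂ → ¬ (∀ x y, S₁ x y → S₂ x y))
    (hc : ∀ S ∈ Ψ, ∀ a b : α, a ≠ b → S a b ∨ S b a)
    (hd : ∀ S₁ ∈ Ψ, ∀ S₂ ∈ Ψ, ∀ f : α → α,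
      (∀ x y, S₁ x y → S₂ (f x) (f y)) → ∀ x y, R x y → R (f x) (f y)) :
    ∀ S₁ : Ψ,
      Cardinal.mk {p : α × Ψ | p.2 = S₁} = Cardinal.mk α ∧
      ∀ f : α × Ψ → α × Ψ,
        (∀ p ∈ {p : α × Ψ | p.2 = S₁}, ∀ q ∈ {p : α × Ψ | p.2 = S₁},
          (p.2 = q.2 ∧ (p.2 : α → α → Prop) p.1 q.1) →
          ((f p).2 = (f q).2 ∧ ((f p).2 : α → α → Prop) (f p).1 (f q).1)) →
        ∀ p : α × Ψ, p.2 = S₁ → f p = p := by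
  intro S₁
  constructor
  · refine Cardinal.mk_congr ⟨fun p => p.1.1, fun a => ⟨(a, S₁), rfl⟩, ?_, fun a => rfl⟩
    rintro ⟨⟨a, S⟩, h⟩
    simp only [Set.mem_setOf_eq] at h
    subst h
    rfl
  · intro f hf p hp
    obtain ⟨a₀⟩ : Nonempty α := inferInstance
    set S₂ := (f (a₀, S₁)).2 with hS₂
    have hconst : ∀ a : α, (f (a, S₁)).2 = S₂ := by
      intro a
      by_cases hcase : a = a₀
      · rw [hcase]
      · rcases hc S₁ S₁.2 a a₀ hcase with h | h
        · exact (hf (a, S₁) rfl (a₀, S₁) rfl ⟨rfl, h⟩).1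
        · exact ((hf (a₀, S₁) rfl (a, S₁) rfl ⟨rfl, h⟩).1).symm
    set g : α → α := fun a => (f (a, S₁)).1 with hg
    have hpres : ∀ x y, (S₁ : α → α → Prop) x y → (S₂ : α → α → Prop) (g x) (g y) := by
      intro x y hxy
      have h := hf (x, S₁) rfl (y, S₁) rfl ⟨rfl, hxy⟩
      have h2 := h.2
      rw [hconst x] at h2
      exact h2
    have hgid : g = id := hRrig g (hd S₁ S₁.2 S₂ S₂.2 g hpres)
    have hpres' : ∀ x y, (S₁ : α → α → Prop) x y → (S₂ : α → α → Prop) x y := by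
      intro x y h
      have := hpres x y h
      rwa [hgid] at this
    have hS : S₂ = S₁ := by
      by_contra hne'
      exact hb S₁ S₁.2 S₂ S₂.2 (fun h => hne' (Subtype.ext h.symm)) hpres'
    have hp' : p = (p.1, S₁) := Prod.ext rfl hp
    rw [hp']
    have h1 : (f (p.1, S₁)).1 = p.1 := congrFun hgid p.1
    have h2 : (f (p.1, S₁)).2 = S₁ := (hconst p.1).trans hS
    exact Prod.ext h1 h2
end

section
/- Let κ be an infinite cardinal. If R ⊆ A × A satisfies condition (κ*), then card A ≤ 2^(2^κ). -/
universe u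

theorem stmt_14 {A : Type u} (κ : Cardinal.{u}) (hκ : Cardinal.aleph0 ≤ κ)
    (R : A → A → Prop)
    (hcond : ∀ x y : A, x ≠ y → ∃ B : Set A, x ∈ B ∧ Cardinal.mk B ≤ κ ∧
      ∀ f : A → A, f x = y →
        ¬ (∀ u ∈ B, ∀ v ∈ B, R u v → R (f u) (f v))) :
    Cardinal.mk A ≤ (2 : Cardinal.{u}) ^ ((2 : Cardinal.{u}) ^ κ) := by
  classical
  set K := κ.out with hK
  have hmkK : Cardinal.mk K = κ := Cardinal.mk_out κ
  let T := (K → K → Prop) × K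
  let Φ : A → Set T := fun x =>
    { t | ∃ g : K → A, g t.2 = x ∧ ∀ i j, t.1 i j → R (g i) (g j) }
  have hΦ : Function.Injective Φ := by
    intro x y hxy
    by_contra hne
    obtain ⟨B, hxB, hBκ, hB⟩ := hcond x y hne
    obtain ⟨e⟩ : Nonempty (B ↪ K) := by
      rw [← Cardinal.le_def, hmkK]; exact hBκ
    set S : K → K → Prop := fun i j => ∃ u v : B, e u = i ∧ e v = j ∧ R u v with hS
    let g : K → A := fun i => if h : ∃ b : B, e b = i then ((h.choose : B) : A) else x
    have hg : ∀ u : B, g (e u) = u := by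
      intro u
      have h : ∃ b : B, e b = e u := ⟨u, rfl⟩
      have := e.injective h.choose_spec
      simp only [g, dif_pos h, this]
    have hmem : (⟨S, e ⟨x, hxB⟩⟩ : T) ∈ Φ x := by
      refine ⟨g, ?_, ?_⟩
      · exact hg ⟨x, hxB⟩
      · rintro i j ⟨u, v, hu, hv, huv⟩
        rw [← hu, ← hv, hg u, hg v]; exact huv
    rw [hxy] at hmem
    obtain ⟨g', hg'p, hg'hom⟩ := hmem
    let f : A → A := fun a => if h : a ∈ B then g' (e ⟨a, h⟩) else y
    have hfx : f x = y := by
      simp only [f, dif_pos hxB]; exact hg'p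
    refine hB f hfx ?_
    intro u hu v hv huv
    have hfu : f u = g' (e ⟨u, hu⟩) := by simp only [f, dif_pos hu]
    have hfv : f v = g' (e ⟨v, hv⟩) := by simp only [f, dif_pos hv]
    rw [hfu, hfv]
    exact hg'hom _ _ ⟨⟨u, hu⟩, ⟨v, hv⟩, rfl, rfl, huv⟩
  have h1 : Cardinal.mk A ≤ 2 ^ Cardinal.mk T := by
    have := Cardinal.mk_le_of_injective hΦ
    rwa [Cardinal.mk_set] at this
  have hfun : Cardinal.mk (K → K → Prop) = 2 ^ κ := by
    rw [← Cardinal.power_def, show Cardinal.mk (K → Prop) = Cardinal.mk (Set K) from rfl,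
      Cardinal.mk_set, hmkK, ← Cardinal.power_mul, Cardinal.mul_eq_self hκ]
  have hκle : κ ≤ 2 ^ κ := le_of_lt (Cardinal.cantor κ)
  have h2inf : Cardinal.aleph0 ≤ (2 : Cardinal.{u}) ^ κ := le_trans hκ hκle
  have hT : Cardinal.mk T ≤ 2 ^ κ := by
    rw [Cardinal.mk_prod, Cardinal.lift_id, Cardinal.lift_id, hfun, hmkK]
    calc (2 : Cardinal.{u}) ^ κ * κ ≤ 2 ^ κ * 2 ^ κ := by
          exact mul_le_mul_right hκle _
      _ = 2 ^ κ := Cardinal.mul_eq_self h2inf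
  refine le_trans h1 ?_
  exact Cardinal.power_le_power_left (by norm_num) hT
end

section
/- For κ = ω: there exists a relation R ⊆ ℕ × ℕ satisfying condition (ω◇◇), hence there exists a rigid binary relation on ℕ all of whose rigidity is witnessed on finite sets: for each n ∈ ℕ there is a finite set F(n) containing n such that every R-preserving map f : F(n) → ℕ is the identity on F(n). -/
theorem stmt_18 :
    ∃ R : ℕ → ℕ → Prop, ∀ x : ℕ, ∃ F : Finset ℕ, x ∈ F ∧
      ∀ f : ℕ → ℕ, (∀ u ∈ F, ∀ v ∈ F, R u v → R (f u) (f v)) →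
        ∀ y ∈ F, f y = y := by
  use fun u v => v = u + 1 ∨ (u = 0 ∧ v = 4)
  intro x
  refine ⟨Finset.range (x + 5), by simp, ?_⟩
  intro f hf
  have mem : ∀ n, n < x + 5 → n ∈ Finset.range (x + 5) := fun n h =>
    Finset.mem_range.mpr h
  have step : ∀ n, n + 1 < x + 5 →
      (f (n + 1) = f n + 1 ∨ (f n = 0 ∧ f (n + 1) = 4)) := by
    intro n h
    exact hf n (mem n (by omega)) (n + 1) (mem _ h) (Or.inl rfl)
  have edge : f 4 = f 0 + 1 ∨ (f 0 = 0 ∧ f 4 = 4) :=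
    hf 0 (mem 0 (by omega)) 4 (mem 4 (by omega)) (Or.inr ⟨rfl, rfl⟩)
  have s0 := step 0 (by omega)
  have s1 := step 1 (by omega)
  have s2 := step 2 (by omega)
  have s3 := step 3 (by omega)
  norm_num at s0 s1 s2 s3
  have h0 : f 0 = 0 := by omega
  have h1 : f 1 = 1 := by omega
  intro y hy
  rw [Finset.mem_range] at hy
  induction y with
  | zero => exact h0
  | succ n ih =>
    have hn := ih (by omega)
    rcases n with _ | m
    · exact h1
    · have := step (m + 1) (by omega)
      omega
end
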